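/- arXiv:2211.13921 — 2 statements merged into one kernel-verified Lean document; each statement's English description precedes it below -/
import Mathlib

section
/- Let C ⊂ ℝ_{>0}^n be an open cone contained in ∑_{i=1}^n ℝ_{>0} α_i' for linearly independent rational vectors α_1',...,α_n' ∈ ℚ^n, with dual basis α_1,...,α_n. Then for k ∈ ℤ_{≥1}, the series ψ_{nk,C}(y) = ∑_{x ∈ C ∩ ℤ^n} ⟨x,y⟩^{-(n+nk)} converges absolutely and locally uniformly on the open set V = {y ∈ ℂ^n \ {0} : Re⟨α_i', y⟩ > 0 for all i}. -/
/-!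
If `x = ∑ cᵢ αᵢ'` with `cᵢ > 0` and `Re ⟨αᵢ', y⟩ ≥ ε > 0` for every `i`, then
`Re ⟨x, y⟩ = ∑ cᵢ Re ⟨αᵢ', y⟩ ≥ ε ∑ cᵢ`, while `‖x‖ ≤ (∑ cᵢ) · ∑ ‖αᵢ'‖`. Hence
`|⟨x, y⟩| ≥ δ ‖x‖ ≥ δ |xⱼ|` for every coordinate `j`, with `δ > 0` uniform for `y` in a compact
subset of `V`. Splitting `|⟨x, y⟩|^{-n(k+1)}` as `∏ⱼ |⟨x, y⟩|^{-(k+1)}` dominates the series by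
`∏ⱼ ∑_{t ∈ ℤ} (δ |t|)^{-(k+1)}`, a product of convergent `p`-series since `k + 1 > 1`.
-/

open Filter Topology

theorem IsCompact.exists_pos_forall_le {κ X : Type*} [Finite κ] [TopologicalSpace X]
    {K : Set X} (hK : IsCompact K) {f : κ → X → ℝ} (hf : ∀ i, ContinuousOn (f i) K)
    (hpos : ∀ i, ∀ y ∈ K, 0 < f i y) : ∃ ε > 0, ∀ i, ∀ y ∈ K, ε ≤ f i y := by
  have hev : ∀ i, ∀ᶠ ε in 𝓝[>] (0 : ℝ), ∀ y ∈ K, ε ≤ f i y := fun i => by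
    obtain ⟨ε, hε, hεf⟩ := hK.exists_forall_le' (hf i) (hpos i)
    filter_upwards [nhdsWithin_le_nhds (eventually_le_nhds hε)] with δ hδ y hy
    exact hδ.trans (hεf y hy)
  obtain ⟨ε, hεf, hε⟩ := ((eventually_all.2 hev).and self_mem_nhdsWithin).exists
  exact ⟨ε, hε, hεf⟩

theorem summable_pi_prod {ι α : Type*} [Fintype ι] {g : α → ℝ} (hg0 : ∀ t, 0 ≤ g t)
    (hg : Summable g) : Summable fun x : ι → α => ∏ j, g (x j) := by
  classical
  have hprod0 : ∀ x : ι → α, 0 ≤ ∏ j, g (x j) := fun x => Finset.prod_nonneg fun j _ => hg0 _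
  refine summable_of_sum_le hprod0 (c := (∑' t, g t) ^ Fintype.card ι) fun S => ?_
  calc ∑ x ∈ S, ∏ j, g (x j)
      ≤ ∑ x ∈ Fintype.piFinset fun j => S.image (· j), ∏ j, g (x j) :=
        Finset.sum_le_sum_of_subset_of_nonneg
          (fun x hx => Fintype.mem_piFinset.2 fun j => Finset.mem_image_of_mem _ hx)
          (fun x _ _ => hprod0 x)
    _ = ∏ j, ∑ t ∈ S.image (· j), g t := (Finset.prod_univ_sum _ _).symm
    _ ≤ ∏ _j : ι, ∑' t, g t :=
        Finset.prod_le_prod (fun j _ => Finset.sum_nonneg fun t _ => hg0 t)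
          fun j _ => hg.sum_le_tsum _ fun t _ => hg0 t
    _ = (∑' t, g t) ^ Fintype.card ι := by simp

theorem summable_inv_mul_abs_intCast_pow (δ : ℝ) {p : ℕ} (hp : 1 < p) :
    Summable fun t : ℤ => ((δ * |(t : ℝ)|) ^ p)⁻¹ :=
  ((Real.summable_one_div_int_pow.2 hp).abs.mul_left (δ ^ p)⁻¹).congr fun t => by
    rw [mul_pow, mul_inv, abs_div, abs_one, abs_pow, one_div]

theorem norm_zpow_neg_le_prod {ι 𝕜 : Type*} [Fintype ι] [NormedDivisionRing 𝕜] {z : 𝕜}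
    {x : ι → ℝ} {δ : ℝ} (hδx : ∀ j, 0 < δ * |x j|) (hz : ∀ j, δ * |x j| ≤ ‖z‖) (p : ℕ) :
    ‖z ^ (-(Fintype.card ι * p : ℤ))‖ ≤ ∏ j, ((δ * |x j|) ^ p)⁻¹ := by
  calc ‖z ^ (-(Fintype.card ι * p : ℤ))‖ = ∏ _j : ι, (‖z‖ ^ p)⁻¹ := by
        rw [norm_zpow, Finset.prod_const, Finset.card_univ, ← inv_pow, ← pow_mul,
          ← zpow_natCast, ← zpow_neg_one, ← zpow_mul]
        push_cast
        ring_nf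
    _ ≤ ∏ j, ((δ * |x j|) ^ p)⁻¹ :=
        Finset.prod_le_prod (fun _ _ => by positivity) fun j _ =>
          inv_anti₀ (pow_pos (hδx j) p) (pow_le_pow_left₀ (hδx j).le (hz j) p)

section Cone

variable {ι κ : Type*} [Fintype ι] [Fintype κ]

theorem le_re_sum_mul_of_mem_cone (v : κ → ι → ℝ) {c : κ → ℝ} (hc : ∀ i, 0 ≤ c i)
    {y : ι → ℂ} {ε : ℝ} (hy : ∀ i, ε ≤ (∑ j, (v i j : ℂ) * y j).re) :
    ε * ∑ i, c i ≤ (∑ j, ((∑ i, c i • v i) j : ℂ) * y j).re := by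
  have hpair : ∑ j, ((∑ i, c i • v i) j : ℂ) * y j = ∑ i, (c i : ℂ) * ∑ j, (v i j : ℂ) * y j := by
    simp only [Finset.sum_apply, Pi.smul_apply, smul_eq_mul, Complex.ofReal_sum,
      Complex.ofReal_mul, Finset.sum_mul, Finset.mul_sum, mul_assoc]
    exact Finset.sum_comm
  rw [hpair, Complex.re_sum, Finset.mul_sum]
  refine Finset.sum_le_sum fun i _ => ?_
  rw [Complex.re_ofReal_mul, mul_comm]
  exact mul_le_mul_of_nonneg_left (hy i) (hc i)

theorem mul_norm_le_mul_norm_of_mem_cone (v : κ → ι → ℝ) {c : κ → ℝ} (hc : ∀ i, 0 ≤ c i)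
    {y : ι → ℂ} {ε : ℝ} (hε : 0 ≤ ε) (hy : ∀ i, ε ≤ (∑ j, (v i j : ℂ) * y j).re) :
    ε * ‖∑ i, c i • v i‖ ≤ (∑ i, ‖v i‖) * ‖∑ j, ((∑ i, c i • v i) j : ℂ) * y j‖ := by
  have hnorm : ‖∑ i, c i • v i‖ ≤ (∑ i, c i) * ∑ i, ‖v i‖ :=
    calc ‖∑ i, c i • v i‖ ≤ ∑ i, c i * ‖v i‖ := by
          refine (norm_sum_le _ _).trans_eq (Finset.sum_congr rfl fun i _ => ?_)
          rw [norm_smul, Real.norm_of_nonneg (hc i)]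
      _ ≤ ∑ i, c i * ∑ i, ‖v i‖ :=
          Finset.sum_le_sum fun i _ => mul_le_mul_of_nonneg_left
            (Finset.single_le_sum (fun i _ => norm_nonneg (v i)) (Finset.mem_univ i)) (hc i)
      _ = (∑ i, c i) * ∑ i, ‖v i‖ := Finset.sum_mul _ _ _ |>.symm
  calc ε * ‖∑ i, c i • v i‖ ≤ (∑ i, ‖v i‖) * (ε * ∑ i, c i) := 
        (mul_le_mul_of_nonneg_left hnorm hε).trans_eq (by ring)
    _ ≤ (∑ i, ‖v i‖) * ‖∑ j, ((∑ i, c i • v i) j : ℂ) * y j‖ :=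
        mul_le_mul_of_nonneg_left ((le_re_sum_mul_of_mem_cone v hc hy).trans (Complex.re_le_norm _))
          (Finset.sum_nonneg fun i _ => norm_nonneg _)

theorem exists_summable_bound_of_isCompact (v : κ → ι → ℝ) {C : Set (ι → ℝ)} (hC0 : ∀ x ∈ C, ∀ j, x j ≠ 0)
    (hCcone : ∀ x ∈ C, ∃ c : κ → ℝ, (∀ i, 0 ≤ c i) ∧ x = ∑ i, c i • v i)
    {K : Set (ι → ℂ)} (hK : IsCompact K)
    (hKpos : ∀ i, ∀ y ∈ K, 0 < (∑ j, (v i j : ℂ) * y j).re) {p : ℕ} (hp : 1 < p) :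
    ∃ u : {x : ι → ℤ // (fun j => (x j : ℝ)) ∈ C} → ℝ, Summable u ∧
      ∀ x, ∀ y ∈ K, ‖(∑ j, (x.1 j : ℂ) * y j) ^ (-(Fintype.card ι * p : ℤ))‖ ≤ u x := by
  obtain ⟨ε, hε, hεK⟩ := hK.exists_pos_forall_le (fun i => by fun_prop) hKpos
  set M := ∑ i, ‖v i‖
  have hM : 0 < M + 1 := by positivity
  set δ := ε / (M + 1)
  refine ⟨fun x => ∏ j, ((δ * |(x.1 j : ℝ)|) ^ p)⁻¹,
    (summable_pi_prod (fun t => by positivity)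
      (summable_inv_mul_abs_intCast_pow δ hp)).comp_injective Subtype.val_injective,
    fun x y hy => ?_⟩
  obtain ⟨c, hc, hx⟩ := hCcone _ x.2
  have hxy := mul_norm_le_mul_norm_of_mem_cone v hc hε.le fun i => hεK i y hy
  rw [← hx] at hxy
  push_cast at hxy
  refine norm_zpow_neg_le_prod (fun j => by have := hC0 _ x.2 j; positivity) (fun j => ?_) p
  calc δ * |(x.1 j : ℝ)| ≤ δ * ‖fun j => (x.1 j : ℝ)‖ := by
        gcongr
        exact norm_le_pi_norm (fun j => (x.1 j : ℝ)) j
    _ ≤ ‖∑ j, (x.1 j : ℂ) * y j‖ := by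
        rw [div_mul_eq_mul_div, div_le_iff₀ hM]
        linarith [norm_nonneg (∑ j, (x.1 j : ℂ) * y j)]

end Cone

theorem summable_norm_and_tendstoLocallyUniformlyOn_tsum {α β F : Type*} [TopologicalSpace β]
    [LocallyCompactSpace β] [NormedAddCommGroup F] [CompleteSpace F] {f : α → β → F} {s : Set β}
    (hs : IsOpen s)
    (hu : ∀ K ⊆ s, IsCompact K → ∃ u : α → ℝ, Summable u ∧ ∀ a, ∀ y ∈ K, ‖f a y‖ ≤ u a) :
    (∀ y ∈ s, Summable fun a => ‖f a y‖) ∧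
      TendstoLocallyUniformlyOn (fun t y => ∑ a ∈ t, f a y) (fun y => ∑' a, f a y) atTop s := by
  refine ⟨fun y hy => ?_, (tendstoLocallyUniformlyOn_iff_forall_isCompact hs).2 fun K hKs hK => ?_⟩
  · obtain ⟨u, hu, hfu⟩ := hu {y} (Set.singleton_subset_iff.2 hy) isCompact_singleton
    exact hu.of_nonneg_of_le (fun a => norm_nonneg _) fun a => hfu a y rfl
  · obtain ⟨u, hu, hfu⟩ := hu K hKs hK
    exact tendstoUniformlyOn_tsum hu hfu

theorem psi_converges_rational_cone_general (n : ℕ) (k : ℕ) (hk : 1 ≤ k)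
    (α' : Fin n → (Fin n → ℚ))
    (C : Set (Fin n → ℝ))
    (hCpos : ∀ x ∈ C, ∀ i, 0 < x i)
    (hCsub : ∀ x ∈ C, ∃ c : Fin n → ℝ, (∀ i, 0 < c i) ∧
      x = ∑ i, c i • (fun j => (α' i j : ℝ))) :
    (∀ y ∈ {y : Fin n → ℂ | y ≠ 0 ∧ ∀ i, 0 < (∑ j, (α' i j : ℂ) * y j).re},
      Summable fun x : {x : Fin n → ℤ // (fun j => (x j : ℝ)) ∈ C} =>
        ‖(∑ j, (x.1 j : ℂ) * y j) ^ (-(n + n * k : ℤ))‖) ∧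
    TendstoLocallyUniformlyOn
      (fun (s : Finset {x : Fin n → ℤ // (fun j => (x j : ℝ)) ∈ C})
          (y : Fin n → ℂ) =>
        ∑ x ∈ s, (∑ j, (x.1 j : ℂ) * y j) ^ (-(n + n * k : ℤ)))
      (fun y => ∑' x : {x : Fin n → ℤ // (fun j => (x j : ℝ)) ∈ C},
        (∑ j, (x.1 j : ℂ) * y j) ^ (-(n + n * k : ℤ)))
      Filter.atTop
      {y : Fin n → ℂ | y ≠ 0 ∧ ∀ i, 0 < (∑ j, (α' i j : ℂ) * y j).re} := by
  have hexp : (n + n * k : ℤ) = Fintype.card (Fin n) * (k + 1 : ℕ) := by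
    push_cast [Fintype.card_fin]; ring
  rw [hexp]
  have hV : IsOpen {y : Fin n → ℂ | y ≠ 0 ∧ ∀ i, 0 < (∑ j, (α' i j : ℂ) * y j).re} := by
    simp only [Set.ofPred_and, Set.ofPred_forall]
    exact isOpen_ne.inter
      (isOpen_iInter_of_finite fun i => isOpen_lt continuous_const (by fun_prop))
  refine summable_norm_and_tendstoLocallyUniformlyOn_tsum hV fun K hKV hK => ?_
  have hKpos : ∀ i, ∀ y ∈ K, 0 < (∑ j, ((α' i j : ℝ) : ℂ) * y j).re := fun i y hy => by
    exact_mod_cast (hKV hy).2 i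
  exact exists_summable_bound_of_isCompact _ (fun x hx j => (hCpos x hx j).ne')
    (fun x hx => (hCsub x hx).imp fun c hc => ⟨fun i => (hc.1 i).le, hc.2⟩) hK hKpos
    (by omega)

/-- Let `C ⊂ ℝ_{>0}^n` be an open cone contained in the cone
generated by linearly independent rational vectors `α' 1, …, α' n`.  Then for
`k ≥ 1` the series `ψ_{nk,C}(y) = ∑_{x ∈ C ∩ ℤ^n} ⟨x,y⟩^{-(n+nk)}` converges
absolutely and locally uniformly on
`V = {y ∈ ℂ^n \ {0} : Re⟨α' i, y⟩ > 0 for all i}`. -/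
theorem psi_converges_rational_cone (n : ℕ) (hn : 0 < n) (k : ℕ) (hk : 1 ≤ k)
    (α' : Fin n → (Fin n → ℚ)) (hα' : LinearIndependent ℚ α')
    (C : Set (Fin n → ℝ)) (hCopen : IsOpen C)
    (hCpos : ∀ x ∈ C, ∀ i, 0 < x i)
    (hCsub : ∀ x ∈ C, ∃ c : Fin n → ℝ, (∀ i, 0 < c i) ∧
      x = ∑ i, c i • (fun j => (α' i j : ℝ))) :
    (∀ y ∈ {y : Fin n → ℂ | y ≠ 0 ∧ ∀ i, 0 < (∑ j, (α' i j : ℂ) * y j).re},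
      Summable fun x : {x : Fin n → ℤ // (fun j => (x j : ℝ)) ∈ C} =>
        ‖(∑ j, (x.1 j : ℂ) * y j) ^ (-(n + n * k : ℤ))‖) ∧
    TendstoLocallyUniformlyOn
      (fun (s : Finset {x : Fin n → ℤ // (fun j => (x j : ℝ)) ∈ C})
          (y : Fin n → ℂ) =>
        ∑ x ∈ s, (∑ j, (x.1 j : ℂ) * y j) ^ (-(n + n * k : ℤ)))
      (fun y => ∑' x : {x : Fin n → ℤ // (fun j => (x j : ℝ)) ∈ C},
        (∑ j, (x.1 j : ℂ) * y j) ^ (-(n + n * k : ℤ)))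
      Filter.atTop
      {y : Fin n → ℂ | y ≠ 0 ∧ ∀ i, 0 < (∑ j, (α' i j : ℂ) * y j).re} :=
  psi_converges_rational_cone_general n k hk α' C hCpos hCsub
end

section
/- With the same notation, the (n−1)-form η(y) = N_{w^*}(y)^k ψ_{nk,T_{w,+}}(y) ω(y) on Ỹ_{w,+} is Γ_{w,+}-invariant under the action y ↦ (γ^T)^{-1} y: for all γ ∈ Γ_{w,+}, N_{w^*}((γ^T)^{-1}y)^k ψ_{nk,T_{w,+}}((γ^T)^{-1}y) ω((γ^T)^{-1}y) = N_{w^*}(y)^k ψ_{nk,T_{w,+}}(y) ω(y). In particular, (i) N_{w^*}((γ^T)^{-1}y) = N_{w^*}(y), (ii) ψ_{nk,T_{w,+}}((γ^T)^{-1}y) = ψ_{nk,T_{w,+}}(y), and (iii) ω(gy) = det(g)·ω(y) for g ∈ GL_n(ℂ), with det(γ) = 1. -/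
/-!
Multiplication by the totally positive unit `a = u` acts on the `ℤ`-basis `w` through `γ`, hence
on the trace-dual basis `w*` through `γᵀ`; applying the real embeddings gives
`τᵢ(a) τᵢ(w*ⱼ) = ∑ₗ γⱼₗ τᵢ(w*ₗ)`, i.e. the embedding matrix intertwines `γ` with the diagonal
matrix of the `τᵢ(a)`. That matrix is nonsingular by Dedekind's independence of characters, so
taking determinants gives `∏ᵢ τᵢ(a) = det γ = 1`, which is the invariance of `N_{w*}`.
As `a` is totally positive, `γ` permutes the lattice points of the cone `T_{w,+}`, and
`⟨x, (γᵀ)⁻¹ y⟩ = ⟨γ⁻¹ x, y⟩`, so `ψ` is invariant by reindexing the series. Finally `ω(y)` is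
`det (y, ·)`, which is multiplied by `det g` under `g`.
-/

open scoped BigOperators

open NumberField

/-- The `(n-1)`-form `ω(y) = ∑ (-1)^{i-1} y_i dy_1∧⋯∧\widehat{dy_i}∧⋯∧dy_n`,
viewed as the alternating form `(v_1,…,v_{n-1}) ↦ det(y, v_1, …, v_{n-1})`. -/
noncomputable def omegaForm (m : ℕ) (y : Fin (m + 1) → ℂ)
    (v : Fin m → (Fin (m + 1) → ℂ)) : ℂ :=
  (Matrix.of fun i j => (Fin.cons y v : Fin (m + 1) → Fin (m + 1) → ℂ) j i).det

open Matrix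

theorem omegaForm_mulVec (m : ℕ) (g : Matrix (Fin (m + 1)) (Fin (m + 1)) ℂ)
    (y : Fin (m + 1) → ℂ) (v : Fin m → Fin (m + 1) → ℂ) :
    omegaForm m (g *ᵥ y) (fun j => g *ᵥ v j) = g.det * omegaForm m y v := by
  have hcols : (of fun i j => (Fin.cons (g *ᵥ y) (fun j => g *ᵥ v j) :
      Fin (m + 1) → Fin (m + 1) → ℂ) j i)
      = g * of fun i j => (Fin.cons y v : Fin (m + 1) → Fin (m + 1) → ℂ) j i := by
    ext i j
    cases j using Fin.cases <;> simp [mul_apply, mulVec, dotProduct]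
  rw [omegaForm, omegaForm, hcols, det_mul]

section Matrices

variable {ι R : Type*} [Fintype ι] [DecidableEq ι]

theorem Matrix.prod_eq_one_of_mul_diagonal_eq_mul [Field R] {E G : Matrix ι ι R} {d : ι → R}
    (hE : E.det ≠ 0) (hG : G.det = 1) (h : E * diagonal d = G * E) : ∏ i, d i = 1 := by
  have := congrArg det h
  rw [det_mul, det_mul, det_diagonal, hG, one_mul] at this
  exact mul_left_cancel₀ hE (this.trans (mul_one _).symm)

theorem Matrix.prod_vecMul_transpose_inv_mulVec [CommRing R] {E G : Matrix ι ι R} {d : ι → R}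
    (hG : IsUnit G.det) (h : E * diagonal d = G * E) (hd : ∏ i, d i = 1) (y : ι → R) :
    ∏ i, ((Gᵀ⁻¹ *ᵥ y) ᵥ* E) i = ∏ i, (y ᵥ* E) i := by
  have hy : y ᵥ* E = ((Gᵀ⁻¹ *ᵥ y) ᵥ* E) ᵥ* diagonal d := by
    rw [vecMul_vecMul, h, ← transpose_nonsing_inv, mulVec_transpose, vecMul_vecMul,
      ← mul_assoc, nonsing_inv_mul _ hG, one_mul]
  rw [hy]
  simp only [vecMul_diagonal, Finset.prod_mul_distrib, hd, mul_one]

theorem Matrix.det_map_intCast [CommRing R] (γ : Matrix ι ι ℤ) :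
    (γ.map ((↑) : ℤ → R)).det = (γ.det : R) := by
  simpa using ((Int.castRingHom R).map_det γ).symm

theorem Matrix.map_intCast_nonsing_inv [CommRing R] {γ : Matrix ι ι ℤ} (hγ : IsUnit γ.det) :
    (γ.map ((↑) : ℤ → R))⁻¹ = γ⁻¹.map (↑) := by
  apply inv_eq_left_inv
  simpa [nonsing_inv_mul _ hγ] using
    (Matrix.map_mul (L := γ⁻¹) (M := γ) (f := Int.castRingHom R)).symm

theorem Matrix.sum_intCast_mul_transpose_inv_mulVec [CommRing R] {γ : Matrix ι ι ℤ}
    (hγ : IsUnit γ.det) (x : ι → ℤ) (y : ι → R) :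
    ∑ l, (x l : R) * ((γ.map ((↑) : ℤ → R))ᵀ⁻¹ *ᵥ y) l = ∑ l, ((γ⁻¹ *ᵥ x) l : R) * y l := by
  change ((↑) ∘ x) ⬝ᵥ _ = ((↑) ∘ (γ⁻¹ *ᵥ x)) ⬝ᵥ y
  rw [dotProduct_mulVec, ← transpose_nonsing_inv, vecMul_transpose, map_intCast_nonsing_inv hγ]
  congr 1
  exact funext fun i => (RingHom.map_mulVec (Int.castRingHom R) γ⁻¹ x i).symm

theorem Matrix.tsum_subtype_nonsing_inv_mulVec {M : Type*} [AddCommMonoid M] [TopologicalSpace M]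
    {γ : Matrix ι ι ℤ} (hγ : IsUnit γ.det) {p : (ι → ℤ) → Prop} (hp : ∀ x, p x ↔ p (γ *ᵥ x))
    (f : (ι → ℤ) → M) : ∑' x : {x // p x}, f (γ⁻¹ *ᵥ x.1) = ∑' x : {x // p x}, f x := by
  let e : (ι → ℤ) ≃ (ι → ℤ) :=
    { toFun := (γ⁻¹ *ᵥ ·)
      invFun := (γ *ᵥ ·)
      left_inv := fun x => by simp [mulVec_mulVec, mul_nonsing_inv _ hγ]
      right_inv := fun x => by simp [mulVec_mulVec, nonsing_inv_mul _ hγ] }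
  refine (e.subtypeEquiv fun x => ?_).tsum_eq (fun x => f x.1)
  simpa [e, mulVec_mulVec, mul_nonsing_inv _ hγ] using (hp (γ⁻¹ *ᵥ x)).symm

theorem Matrix.tsum_subtype_sum_mul_transpose_inv_mulVec [CommRing R] {M : Type*}
    [AddCommMonoid M] [TopologicalSpace M] {γ : Matrix ι ι ℤ} (hγ : IsUnit γ.det)
    {p : (ι → ℤ) → Prop} (hp : ∀ x, p x ↔ p (γ *ᵥ x)) (f : R → M) (y : ι → R) :
    ∑' x : {x // p x}, f (∑ l, (x.1 l : R) * ((γ.map ((↑) : ℤ → R))ᵀ⁻¹ *ᵥ y) l)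
      = ∑' x : {x // p x}, f (∑ l, (x.1 l : R) * y l) := by
  simp_rw [sum_intCast_mul_transpose_inv_mulVec hγ]
  exact tsum_subtype_nonsing_inv_mulVec hγ hp fun x => f (∑ l, (x l : R) * y l)

end Matrices

section Embeddings

variable {ι κ F R : Type*} [Fintype ι]

theorem mul_eq_sum_zsmul_of_sum_mulVec_zsmul [DecidableEq ι] [Ring F] {w : ι → F} {a : F}
    {γ : Matrix ι ι ℤ}
    (h : ∀ x : ι → ℤ, ∑ j, (γ *ᵥ x) j • w j = a * ∑ j, x j • w j) (j : ι) :
    a * w j = ∑ l, γᵀ j l • w l := by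
  simpa [mulVec, dotProduct, Pi.single_apply] using (h (Pi.single j 1)).symm

theorem sum_mulVec_mul_map [Ring F] [CommRing R] (σ : F →+* R) {w : ι → F} {a : F}
    {γ : Matrix ι ι ℤ} (h : ∀ x : ι → ℤ, ∑ j, (γ *ᵥ x) j • w j = a * ∑ j, x j • w j)
    (x : ι → ℤ) : ∑ l, ((γ *ᵥ x) l : R) * σ (w l) = σ a * ∑ l, (x l : R) * σ (w l) := by
  simpa [map_sum, zsmul_eq_mul] using congrArg σ (h x)

theorem forall_pos_sum_mulVec_iff [Ring F] [CommRing R] [LinearOrder R] [IsStrictOrderedRing R]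
    (σ : κ → F →+* R) {w : ι → F} {a : F} {γ : Matrix ι ι ℤ}
    (h : ∀ x : ι → ℤ, ∑ j, (γ *ᵥ x) j • w j = a * ∑ j, x j • w j) (ha : ∀ i, 0 < σ i a)
    (x : ι → ℤ) :
    (∀ i, 0 < ∑ l, (x l : R) * σ i (w l)) ↔ ∀ i, 0 < ∑ l, ((γ *ᵥ x) l : R) * σ i (w l) := by
  simp only [sum_mulVec_mul_map _ h, mul_pos_iff_of_pos_left (ha _)]

variable [Fintype κ] [DecidableEq κ]

def embeddingMatrix [Ring F] [CommRing R] (σ : κ → F →+* R) (v : ι → F) : Matrix ι κ R :=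
  of fun l i => σ i (v l)

theorem embeddingMatrix_mul_diagonal [Ring F] [CommRing R] (σ : κ → F →+* R) {v : ι → F} {a : F}
    {c : Matrix ι ι ℤ} (h : ∀ j, a * v j = ∑ l, c j l • v l) :
    embeddingMatrix σ v * diagonal (fun i => σ i a)
      = c.map ((↑) : ℤ → R) * embeddingMatrix σ v := by
  ext j i
  rw [mul_diagonal, mul_apply]
  simpa [embeddingMatrix, map_sum, zsmul_eq_mul, mul_comm] using congrArg (σ i) (h j)

theorem det_embeddingMatrix_ne_zero [DecidableEq ι] [Field F] [CharZero F] [Field R] [CharZero R]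
    (b : Module.Basis ι ℚ F) {σ : ι → F →+* R} (hσ : Function.Injective σ) :
    (embeddingMatrix σ b).det ≠ 0 := by
  intro h0
  obtain ⟨c, hc0, hc⟩ := exists_mulVec_eq_zero_iff.mpr h0
  have hchar : Function.Injective fun i => (σ i : F →* R) :=
    fun i j hij => hσ (RingHom.ext (DFunLike.congr_fun (f := (σ i : F →* R)) hij))
  refine hc0 (funext (Fintype.linearIndependent_iff.mp
    ((linearIndependent_monoidHom F R).comp _ hchar) c (funext fun x => ?_)))
  have hzero : ∑ i, c i • (σ i).toRatAlgHom.toLinearMap = 0 :=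
    b.ext fun l => by simpa [mulVec, dotProduct, embeddingMatrix, mul_comm] using congrFun hc l
  simpa using LinearMap.congr_fun hzero x

end Embeddings

theorem mul_traceDual_eq_sum {K L ι : Type*} [Field K] [Field L] [Algebra K L]
    [FiniteDimensional K L] [Algebra.IsSeparable K L] [Fintype ι] [DecidableEq ι]
    (b : Module.Basis ι K L) {b' : ι → L}
    (hb' : ∀ i j, Algebra.trace K L (b i * b' j) = if i = j then 1 else 0)
    {a : L} {c : Matrix ι ι ℤ} (h : ∀ j, a * b j = ∑ l, c j l • b l) (j : ι) :
    a * b' j = ∑ l, cᵀ j l • b' l := by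
  rw [← sub_eq_zero]
  refine (traceForm_nondegenerate K L).1 _ fun z => ?_
  suffices Algebra.traceForm K L (a * b' j - ∑ l, cᵀ j l • b' l) = 0 by
    simpa using LinearMap.congr_fun this z
  refine b.ext fun i => ?_
  have hleft : Algebra.trace K L (a * b' j * b i) = c i j := by
    rw [mul_comm a, mul_assoc, h, Finset.mul_sum, map_sum]
    simp_rw [mul_smul_comm, map_zsmul, mul_comm (b' j), hb']
    simp
  have hright : Algebra.trace K L ((∑ l, cᵀ j l • b' l) * b i) = c i j := by
    rw [Finset.sum_mul, map_sum]
    simp_rw [smul_mul_assoc, map_zsmul, mul_comm (b' _) (b i), hb']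
    simp
  rw [LinearMap.zero_apply, Algebra.traceForm_apply, sub_mul, map_sub, hleft, hright, sub_self]

theorem eta_form_invariant_general (F : Type*) [Field F] [NumberField F]
    (m : ℕ) (hdeg : Module.finrank ℚ F = m + 1)
    (τ : Fin (m + 1) → (F →+* ℝ)) (hτ : Function.Injective τ)
    (w : Fin (m + 1) → F)
    (hwind : LinearIndependent ℤ w)
    (wst : Fin (m + 1) → F)
    (hdual : ∀ i j, Algebra.trace ℚ F (w i * wst j) = if i = j then 1 else 0)
    (k : ℕ)
    (u : (𝓞 F)ˣ) (hu : ∀ i, 0 < τ i (algebraMap (𝓞 F) F u))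
    (γ : Matrix (Fin (m + 1)) (Fin (m + 1)) ℤ)
    (hγ : ∀ x : Fin (m + 1) → ℤ, (∑ j, γ.mulVec x j • w j)
      = algebraMap (𝓞 F) F u * ∑ j, x j • w j)
    (hγdet : γ.det = 1) :
    (∀ (y : Fin (m + 1) → ℂ) (v : Fin m → (Fin (m + 1) → ℂ)),
      (∏ i, ∑ l, ((γ.map ((↑) : ℤ → ℂ)).transpose⁻¹.mulVec y) l
          * (τ i (wst l) : ℂ)) ^ k
        * (∑' x : {x : Fin (m + 1) → ℤ //
              ∀ i, 0 < ∑ l, (x l : ℝ) * τ i (w l)},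
            (∑ l, (x.1 l : ℂ)
              * ((γ.map ((↑) : ℤ → ℂ)).transpose⁻¹.mulVec y) l)
              ^ (-((m + 1) + (m + 1) * k : ℤ)))
        * omegaForm m ((γ.map ((↑) : ℤ → ℂ)).transpose⁻¹.mulVec y)
            (fun j => (γ.map ((↑) : ℤ → ℂ)).transpose⁻¹.mulVec (v j))
      = (∏ i, ∑ l, y l * (τ i (wst l) : ℂ)) ^ k
        * (∑' x : {x : Fin (m + 1) → ℤ //
              ∀ i, 0 < ∑ l, (x l : ℝ) * τ i (w l)},
            (∑ l, (x.1 l : ℂ) * y l) ^ (-((m + 1) + (m + 1) * k : ℤ)))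
        * omegaForm m y v) ∧
    (∀ y : Fin (m + 1) → ℂ,
      (∏ i, ∑ l, ((γ.map ((↑) : ℤ → ℂ)).transpose⁻¹.mulVec y) l
          * (τ i (wst l) : ℂ))
        = ∏ i, ∑ l, y l * (τ i (wst l) : ℂ)) ∧
    (∀ y : Fin (m + 1) → ℂ,
      (∑' x : {x : Fin (m + 1) → ℤ //
            ∀ i, 0 < ∑ l, (x l : ℝ) * τ i (w l)},
          (∑ l, (x.1 l : ℂ)
            * ((γ.map ((↑) : ℤ → ℂ)).transpose⁻¹.mulVec y) l)
            ^ (-((m + 1) + (m + 1) * k : ℤ)))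
        = ∑' x : {x : Fin (m + 1) → ℤ //
            ∀ i, 0 < ∑ l, (x l : ℝ) * τ i (w l)},
          (∑ l, (x.1 l : ℂ) * y l) ^ (-((m + 1) + (m + 1) * k : ℤ))) ∧
    (∀ (g : Matrix (Fin (m + 1)) (Fin (m + 1)) ℂ) (y : Fin (m + 1) → ℂ)
        (v : Fin m → (Fin (m + 1) → ℂ)),
      omegaForm m (g.mulVec y) (fun j => g.mulVec (v j))
        = g.det * omegaForm m y v) := by
  set a := algebraMap (𝓞 F) F u
  have hγunit : IsUnit γ.det := hγdet ▸ isUnit_one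
  have hΓdet : (γ.map ((↑) : ℤ → ℂ)).det = 1 := by rw [det_map_intCast, hγdet, Int.cast_one]
  obtain ⟨b, rfl⟩ : ∃ b : Module.Basis (Fin (m + 1)) ℚ F, ⇑b = w :=
    ⟨basisOfLinearIndependentOfCardEqFinrank ((LinearIndependent.iff_fractionRing ℤ ℚ).mp hwind)
      (by simp [hdeg]), coe_basisOfLinearIndependentOfCardEqFinrank _ _⟩
  have hb := mul_eq_sum_zsmul_of_sum_mulVec_zsmul hγ
  have hnorm : ∏ i, τ i a = 1 :=
    prod_eq_one_of_mul_diagonal_eq_mul (det_embeddingMatrix_ne_zero b hτ)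
      (by rw [det_map_intCast, det_transpose, hγdet, Int.cast_one])
      (embeddingMatrix_mul_diagonal τ hb)
  have hN := prod_vecMul_transpose_inv_mulVec (hΓdet ▸ isUnit_one)
    (embeddingMatrix_mul_diagonal (fun i => Complex.ofRealHom.comp (τ i))
      (mul_traceDual_eq_sum b hdual hb)) (by simpa using congrArg ((↑) : ℝ → ℂ) hnorm)
  have hψ := tsum_subtype_sum_mul_transpose_inv_mulVec hγunit (forall_pos_sum_mulVec_iff τ hγ hu)
    fun z : ℂ => z ^ (-((m + 1) + (m + 1) * k : ℤ))
  have hdet : ((γ.map ((↑) : ℤ → ℂ))ᵀ⁻¹).det = 1 := by simp [det_nonsing_inv, hΓdet]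
  refine ⟨fun y v => ?_, hN, hψ, omegaForm_mulVec m⟩
  rw [omegaForm_mulVec, hdet, one_mul]
  exact congr($(hN y) ^ k * $(hψ y) * omegaForm m y v)

/-- the form `η(y) = N_{w^*}(y)^k ψ_{nk,T_{w,+}}(y) ω(y)` is
`Γ_{w,+}`-invariant under `y ↦ (γ^T)^{-1} y`; in particular
(i) `N_{w^*}((γ^T)^{-1} y) = N_{w^*}(y)`,
(ii) `ψ_{nk,T_{w,+}}((γ^T)^{-1} y) = ψ_{nk,T_{w,+}}(y)`, and
(iii) `ω(g y) = det g · ω(y)` for every `g ∈ GL_n(ℂ)` (here `det γ = 1`). -/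
theorem eta_form_invariant (F : Type*) [Field F] [NumberField F]
    (m : ℕ) (hdeg : Module.finrank ℚ F = m + 1)
    (τ : Fin (m + 1) → (F →+* ℝ)) (hτ : Function.Injective τ)
    (𝔞 : FractionalIdeal (nonZeroDivisors (𝓞 F)) F)
    (w : Fin (m + 1) → F)
    (hw : ∀ x : F, x ∈ 𝔞 ↔ ∃ c : Fin (m + 1) → ℤ, x = ∑ l, c l • w l)
    (hwind : LinearIndependent ℤ w)
    (wst : Fin (m + 1) → F)
    (hdual : ∀ i j, Algebra.trace ℚ F (w i * wst j) = if i = j then 1 else 0)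
    (k : ℕ) (hk : 1 ≤ k)
    (u : (𝓞 F)ˣ) (hu : ∀ i, 0 < τ i (algebraMap (𝓞 F) F u))
    (γ : Matrix (Fin (m + 1)) (Fin (m + 1)) ℤ)
    (hγ : ∀ x : Fin (m + 1) → ℤ, (∑ j, γ.mulVec x j • w j)
      = algebraMap (𝓞 F) F u * ∑ j, x j • w j)
    (hγdet : γ.det = 1) :
    (∀ (y : Fin (m + 1) → ℂ) (v : Fin m → (Fin (m + 1) → ℂ)),
      (∏ i, ∑ l, ((γ.map ((↑) : ℤ → ℂ)).transpose⁻¹.mulVec y) l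
          * (τ i (wst l) : ℂ)) ^ k
        * (∑' x : {x : Fin (m + 1) → ℤ //
              ∀ i, 0 < ∑ l, (x l : ℝ) * τ i (w l)},
            (∑ l, (x.1 l : ℂ)
              * ((γ.map ((↑) : ℤ → ℂ)).transpose⁻¹.mulVec y) l)
              ^ (-((m + 1) + (m + 1) * k : ℤ)))
        * omegaForm m ((γ.map ((↑) : ℤ → ℂ)).transpose⁻¹.mulVec y)
            (fun j => (γ.map ((↑) : ℤ → ℂ)).transpose⁻¹.mulVec (v j))
      = (∏ i, ∑ l, y l * (τ i (wst l) : ℂ)) ^ k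
        * (∑' x : {x : Fin (m + 1) → ℤ //
              ∀ i, 0 < ∑ l, (x l : ℝ) * τ i (w l)},
            (∑ l, (x.1 l : ℂ) * y l) ^ (-((m + 1) + (m + 1) * k : ℤ)))
        * omegaForm m y v) ∧
    (∀ y : Fin (m + 1) → ℂ,
      (∏ i, ∑ l, ((γ.map ((↑) : ℤ → ℂ)).transpose⁻¹.mulVec y) l
          * (τ i (wst l) : ℂ))
        = ∏ i, ∑ l, y l * (τ i (wst l) : ℂ)) ∧
    (∀ y : Fin (m + 1) → ℂ,
      (∑' x : {x : Fin (m + 1) → ℤ //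
            ∀ i, 0 < ∑ l, (x l : ℝ) * τ i (w l)},
          (∑ l, (x.1 l : ℂ)
            * ((γ.map ((↑) : ℤ → ℂ)).transpose⁻¹.mulVec y) l)
            ^ (-((m + 1) + (m + 1) * k : ℤ)))
        = ∑' x : {x : Fin (m + 1) → ℤ //
            ∀ i, 0 < ∑ l, (x l : ℝ) * τ i (w l)},
          (∑ l, (x.1 l : ℂ) * y l) ^ (-((m + 1) + (m + 1) * k : ℤ))) ∧
    (∀ (g : Matrix (Fin (m + 1)) (Fin (m + 1)) ℂ) (y : Fin (m + 1) → ℂ)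
        (v : Fin m → (Fin (m + 1) → ℂ)),
      omegaForm m (g.mulVec y) (fun j => g.mulVec (v j))
        = g.det * omegaForm m y v) :=
  eta_form_invariant_general F m hdeg τ hτ w hwind wst hdual k u hu γ hγ hγdet
end
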